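/- arXiv:math/0510501 — 6 statements merged into one kernel-verified Lean document; each statement's English description precedes it below -/
import Mathlib

section
/- The map φ : ℍ → ℝ × ℂ defined on ℂ² ≅ ℍ by φ(z,w) = (½(|z|² − |w|²), i·z·w) is surjective. -/
/-!
Write `c = ‖c‖ e^{i arg c}` and `s = √(t² + ‖c‖²)`. With the real numbers `a = √(s + t)` and
`b = √(s - t)` one has `a² - b² = 2t` and `ab = √(s² - t²) = ‖c‖`, so
`(z, w) = (a, -i b e^{i arg c})` is a preimage of `(t, c)`.
-/

open Complex

theorem Real.exists_sq_sub_sq_eq_and_mul_eq (t r : ℝ) (hr : 0 ≤ r) :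
    ∃ a b : ℝ, a ^ 2 - b ^ 2 = 2 * t ∧ a * b = r := by
  set s := √(t ^ 2 + r ^ 2)
  have hs : s ^ 2 = t ^ 2 + r ^ 2 := Real.sq_sqrt (by positivity)
  have hts : |t| ≤ s := Real.abs_le_sqrt (by nlinarith)
  obtain ⟨hst, hts⟩ := abs_le.mp hts
  refine ⟨√(s + t), √(s - t), ?_, ?_⟩
  · rw [Real.sq_sqrt (by linarith), Real.sq_sqrt (by linarith)]
    ring
  · rw [← Real.sqrt_mul (by linarith), ← Real.sqrt_sq hr]
    congr 1
    linear_combination hs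

/-- The hyperkähler moment map `φ(z,w) = (½(|z|² − |w|²), i·z·w)` on ℍ ≅ ℂ² is
surjective onto ℝ × ℂ ≅ ℝ³. -/
theorem stmt_0 :
    Function.Surjective (fun p : ℂ × ℂ =>
      ((1 / 2 : ℝ) * (‖p.1‖ ^ 2 - ‖p.2‖ ^ 2),
        Complex.I * p.1 * p.2) : ℂ × ℂ → ℝ × ℂ) := by
  rintro ⟨t, c⟩
  obtain ⟨a, b, hsub, hmul⟩ := Real.exists_sq_sub_sq_eq_and_mul_eq t ‖c‖ (norm_nonneg c)
  refine ⟨(a, -I * b * exp (arg c * I)), Prod.ext ?_ ?_⟩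
  · have hnorm : ‖-I * b * exp (arg c * I)‖ = |b| := by
      rw [norm_mul, norm_mul, norm_exp_ofReal_mul_I, norm_neg, norm_I, norm_real,
        Real.norm_eq_abs, one_mul, mul_one]
    simp only [norm_real, Real.norm_eq_abs, hnorm, sq_abs, hsub]
    ring
  · calc I * a * (-I * b * exp (arg c * I)) = -I ^ 2 * ((a * b : ℝ) * exp (arg c * I)) := by
          push_cast; ring
      _ = c := by rw [I_sq, hmul, norm_mul_exp_arg_mul_I]; ring
end

section
/- For the map φ : ℂ² → ℝ × ℂ, φ(z,w) = (½(|z|² − |w|²), i·z·w), the fibre over (0,0) consists of the single point (0,0), and the fibre over any other point is exactly one free orbit of the circle action e^{iθ}·(z,w) = (e^{iθ}z, e^{−iθ}w). -/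
/-!
The moment map is invariant under the circle action, and its two components determine
`‖z‖² - ‖w‖²` and `‖z‖‖w‖`, hence `‖z‖² + ‖w‖²` and so `‖z‖` and `‖w‖`. Two points with the
same norms and the same product `z w` differ by a unit complex number acting as `(u z, u⁻¹ w)`. A point of a nonzero fibre has `z ≠ 0` or
`w ≠ 0`, and either coordinate forces the stabilising `u` to be `1`.
-/

open Complex

noncomputable section

def momentMap (p : ℂ × ℂ) : ℝ × ℂ :=
  ((1 / 2 : ℝ) * (‖p.1‖ ^ 2 - ‖p.2‖ ^ 2), I * p.1 * p.2)

def circleAct (u : Circle) (p : ℂ × ℂ) : ℂ × ℂ :=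
  ((u : ℂ) * p.1, (u : ℂ)⁻¹ * p.2)

end

theorem momentMap_zero : momentMap 0 = 0 := by
  simp [momentMap]

theorem momentMap_circleAct (u : Circle) (p : ℂ × ℂ) :
    momentMap (circleAct u p) = momentMap p := by
  simp only [momentMap, circleAct, norm_mul, norm_inv, Circle.norm_coe, inv_one, one_mul,
    Prod.mk.injEq, true_and]
  linear_combination (I * p.1 * p.2) * mul_inv_cancel₀ (Circle.coe_ne_zero u)

theorem eq_and_eq_of_sq_sub_sq_eq_of_mul_eq {x y x' y' : ℝ}
    (hx : 0 ≤ x) (hy : 0 ≤ y) (hx' : 0 ≤ x') (hy' : 0 ≤ y')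
    (hsub : x ^ 2 - y ^ 2 = x' ^ 2 - y' ^ 2) (hmul : x * y = x' * y') :
    x = x' ∧ y = y' := by
  -- `(x² + y²)² = (x² - y²)² + 4 (x y)²`
  have hsum : x ^ 2 + y ^ 2 = x' ^ 2 + y' ^ 2 := by
    refine (pow_left_inj₀ (by positivity) (by positivity) two_ne_zero).1 ?_
    linear_combination (x ^ 2 - y ^ 2 + (x' ^ 2 - y' ^ 2)) * hsub + 4 * (x * y + x' * y') * hmul
  exact ⟨(pow_left_inj₀ hx hx' two_ne_zero).1 (by linarith),
    (pow_left_inj₀ hy hy' two_ne_zero).1 (by linarith)⟩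

theorem mul_eq_of_momentMap_eq {p q : ℂ × ℂ} (h : momentMap p = momentMap q) :
    p.1 * p.2 = q.1 * q.2 := by
  have h2 : I * p.1 * p.2 = I * q.1 * q.2 := congrArg Prod.snd h
  simpa only [mul_assoc, mul_right_inj' I_ne_zero] using h2

theorem norm_eq_of_momentMap_eq {p q : ℂ × ℂ} (h : momentMap p = momentMap q) :
    ‖p.1‖ = ‖q.1‖ ∧ ‖p.2‖ = ‖q.2‖ := by
  have hsub : (1 / 2 : ℝ) * (‖p.1‖ ^ 2 - ‖p.2‖ ^ 2) = (1 / 2 : ℝ) * (‖q.1‖ ^ 2 - ‖q.2‖ ^ 2) :=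
    congrArg Prod.fst h
  refine eq_and_eq_of_sq_sub_sq_eq_of_mul_eq (norm_nonneg _) (norm_nonneg _) (norm_nonneg _)
    (norm_nonneg _) (by linarith) ?_
  rw [← norm_mul, ← norm_mul, mul_eq_of_momentMap_eq h]

theorem momentMap_eq_zero_iff {p : ℂ × ℂ} : momentMap p = 0 ↔ p = 0 := by
  refine ⟨fun h => ?_, fun h => h ▸ momentMap_zero⟩
  obtain ⟨h1, h2⟩ := norm_eq_of_momentMap_eq (h.trans momentMap_zero.symm)
  exact Prod.ext (norm_eq_zero.1 (by simpa using h1)) (norm_eq_zero.1 (by simpa using h2))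

theorem Circle.exists_mul_eq_of_norm_eq {a b : ℂ} (h : ‖a‖ = ‖b‖) : ∃ u : Circle, u * a = b := by
  rcases eq_or_ne a 0 with rfl | ha
  · exact ⟨1, by simpa [eq_comm] using h⟩
  · refine ⟨⟨b / a, mem_sphere_zero_iff_norm.2 ?_⟩, div_mul_cancel₀ b ha⟩
    rw [norm_div, h, div_self (h ▸ norm_ne_zero_iff.2 ha)]

theorem exists_circleAct_eq_of_momentMap_eq {p q : ℂ × ℂ} (h : momentMap p = momentMap q) :
    ∃ u : Circle, circleAct u p = q := by
  obtain ⟨hn1, hn2⟩ := norm_eq_of_momentMap_eq h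
  have hmul := mul_eq_of_momentMap_eq h
  rcases eq_or_ne p.1 0 with hp | hp
  · obtain ⟨v, hv⟩ := Circle.exists_mul_eq_of_norm_eq hn2
    have hq : q.1 = 0 := norm_eq_zero.1 (hn1 ▸ norm_eq_zero.2 hp)
    exact ⟨v⁻¹, Prod.ext (by simp [circleAct, hp, hq]) (by simpa [circleAct] using hv)⟩
  · obtain ⟨u, hu⟩ := Circle.exists_mul_eq_of_norm_eq hn1
    refine ⟨u, Prod.ext hu ?_⟩
    -- `p.1 * (u⁻¹ * p.2) = u⁻¹ * (q.1 * q.2) = p.1 * q.2`, since `q.1 = u * p.1`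
    refine mul_left_cancel₀ hp ?_
    simp only [circleAct]
    rw [mul_left_comm, hmul, ← hu, mul_assoc, inv_mul_cancel_left₀ (Circle.coe_ne_zero u)]

theorem momentMap_preimage_eq_range_circleAct (p : ℂ × ℂ) :
    momentMap ⁻¹' {momentMap p} = Set.range (circleAct · p) := by
  ext q
  exact ⟨fun h => exists_circleAct_eq_of_momentMap_eq h.symm,
    fun ⟨u, hu⟩ => hu ▸ momentMap_circleAct u p⟩

theorem eq_one_of_circleAct_eq_self {p : ℂ × ℂ} (hp : p ≠ 0) {u : Circle}
    (hu : circleAct u p = p) : u = 1 := by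
  simp only [circleAct, Prod.ext_iff] at hu
  rcases eq_or_ne p.1 0 with h1 | h1
  · have h2 : p.2 ≠ 0 := fun h2 => hp (Prod.ext h1 h2)
    exact inv_eq_one.1 (Circle.ext (by simpa [h2] using hu.2))
  · exact Circle.ext (by simpa [h1] using hu.1)

/-- For `φ(z,w) = (½(|z|² − |w|²), i·z·w)` : ℂ² → ℝ × ℂ, the fibre over `(0,0)`
is the single point `(0,0)`; the fibre over any other point is exactly one
orbit of the circle action `u·(z,w) = (u z, u⁻¹ w)`, and that orbit is free. -/
theorem stmt_1
    (φ : ℂ × ℂ → ℝ × ℂ)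
    (hφ : φ = fun p => ((1 / 2 : ℝ) * (‖p.1‖ ^ 2 - ‖p.2‖ ^ 2),
      Complex.I * p.1 * p.2)) :
    (φ ⁻¹' {(0, 0)} = {(0, 0)}) ∧
    ∀ c : ℝ × ℂ, c ≠ (0, 0) → ∀ p ∈ φ ⁻¹' {c},
      (φ ⁻¹' {c} = {q | ∃ u : Circle, ((u : ℂ) * p.1, (u : ℂ)⁻¹ * p.2) = q}) ∧
      (∀ u : Circle, ((u : ℂ) * p.1, (u : ℂ)⁻¹ * p.2) = p → u = 1) := by
  obtain rfl : φ = momentMap := hφ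
  refine ⟨Set.ext fun p => momentMap_eq_zero_iff, fun c hc p hp => ?_⟩
  obtain rfl : momentMap p = c := hp
  have hp0 : p ≠ 0 := by
    rintro rfl
    exact hc momentMap_zero
  exact ⟨momentMap_preimage_eq_range_circleAct p, fun u => eq_one_of_circleAct_eq_self hp0⟩
end

section
/- Let μ : M → ℝ³ be a continuous map on a topological space M, and suppose ‖μ(s)‖ ≤ K for all s ∈ M (with K > 0). If (t,s,z,w) ∈ ℝ_{>0} × M × ℂ × ℂ satisfies t²·μ(s) = (½(|z|² − |w|²), i·z·w) and t² + |z|² + |w|² = 1, then t² ≥ 1/(1 + 2K). In particular t is bounded away from zero on this set. -/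
/-!
The map `(z, w) ↦ (½(|z|² − |w|²), i z w)` scales norms quadratically:
`‖(½(|z|² − |w|²), i z w)‖ = ½(|z|² + |w|²)`. Taking norms in the level-set equation therefore
gives `t² ‖μ(s)‖ = ½(|z|² + |w|²) = ½(1 − t²)`, and `‖μ(s)‖ ≤ K` yields `1 − t² ≤ 2 K t²`.
-/

open Complex

noncomputable def euclidNorm (p : ℝ × ℂ) : ℝ := √(p.1 ^ 2 + ‖p.2‖ ^ 2)

lemma euclidNorm_nonneg (p : ℝ × ℂ) : 0 ≤ euclidNorm p := Real.sqrt_nonneg _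

lemma euclidNorm_mul {c : ℝ} (hc : 0 ≤ c) (p : ℝ × ℂ) :
    euclidNorm (c * p.1, (c : ℂ) * p.2) = c * euclidNorm p := by
  have hsq : (c * p.1) ^ 2 + ‖(c : ℂ) * p.2‖ ^ 2 = c ^ 2 * (p.1 ^ 2 + ‖p.2‖ ^ 2) := by
    rw [norm_mul, Complex.norm_real, Real.norm_of_nonneg hc]
    ring
  rw [euclidNorm, euclidNorm, hsq, Real.sqrt_mul (sq_nonneg c), Real.sqrt_sq hc]

lemma euclidNorm_hopf (z w : ℂ) :
    euclidNorm ((1 / 2 : ℝ) * (‖z‖ ^ 2 - ‖w‖ ^ 2), I * z * w) = (1 / 2) * (‖z‖ ^ 2 + ‖w‖ ^ 2) := by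
  have hsq : ((1 / 2 : ℝ) * (‖z‖ ^ 2 - ‖w‖ ^ 2)) ^ 2 + ‖I * z * w‖ ^ 2 =
      ((1 / 2) * (‖z‖ ^ 2 + ‖w‖ ^ 2)) ^ 2 := by
    rw [norm_mul, norm_mul, Complex.norm_I]
    ring
  rw [euclidNorm, hsq, Real.sqrt_sq (by positivity)]

theorem stmt_4_general {M : Type*} (μ : M → ℝ × ℂ)
    (K : ℝ)
    (hbound : ∀ s : M, Real.sqrt ((μ s).1 ^ 2 + ‖(μ s).2‖ ^ 2) ≤ K)
    (t : ℝ) (s : M) (z w : ℂ)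
    (hlevel : (t ^ 2 * (μ s).1, (t ^ 2 : ℂ) * (μ s).2) =
      ((1 / 2 : ℝ) * (‖z‖ ^ 2 - ‖w‖ ^ 2), Complex.I * z * w))
    (hunit : t ^ 2 + ‖z‖ ^ 2 + ‖w‖ ^ 2 = 1) :
    1 / (1 + 2 * K) ≤ t ^ 2 := by
  have hμs : euclidNorm (μ s) ≤ K := hbound s
  have hnorm : t ^ 2 * euclidNorm (μ s) = (1 / 2) * (‖z‖ ^ 2 + ‖w‖ ^ 2) := by
    have := congrArg euclidNorm hlevel
    rwa [← Complex.ofReal_pow, euclidNorm_mul (sq_nonneg t), euclidNorm_hopf] at this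
  have hK : 0 ≤ K := (euclidNorm_nonneg _).trans hμs
  rw [div_le_iff₀ (by positivity)]
  linarith [mul_le_mul_of_nonneg_left hμs (sq_nonneg t)]

/-- Key estimate for the three-Sasaki modification: if `‖μ‖ ≤ K` on `M` (K > 0),
`t > 0`, `t²·μ(s) = (½(|z|² − |w|²), i·z·w)` and `t² + |z|² + |w|² = 1`, then
`t² ≥ 1/(1 + 2K)`; in particular `t` is bounded away from zero. -/
theorem stmt_4 {M : Type*} [TopologicalSpace M] (μ : M → ℝ × ℂ)
    (hμ : Continuous μ) (K : ℝ) (hK : 0 < K)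
    (hbound : ∀ s : M, Real.sqrt ((μ s).1 ^ 2 + ‖(μ s).2‖ ^ 2) ≤ K)
    (t : ℝ) (s : M) (z w : ℂ) (ht : 0 < t)
    (hlevel : (t ^ 2 * (μ s).1, (t ^ 2 : ℂ) * (μ s).2) =
      ((1 / 2 : ℝ) * (‖z‖ ^ 2 - ‖w‖ ^ 2), Complex.I * z * w))
    (hunit : t ^ 2 + ‖z‖ ^ 2 + ‖w‖ ^ 2 = 1) :
    1 / (1 + 2 * K) ≤ t ^ 2 :=
  stmt_4_general μ K hbound t s z w hlevel hunit
end

section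
/- If μ : M → ℝ³ is continuous on a compact space M, then the set {(t,s,z,w) ∈ ℝ_{>0} × M × ℂ² : t²·μ(s) = (½(|z|² − |w|²), i·z·w) and t² + |z|² + |w|² = 1} is compact. -/
/-! At `t = 0` the moment-map equation forces `|z| = |w|` and `z w = 0`, hence `z = w = 0`, which
contradicts `t² + |z|² + |w|² = 1`. So the condition `0 < t` may be relaxed to the closed
condition `0 ≤ t`, and the set becomes a closed subset of the compact box
`[-1, 1] × M × D̄ × D̄`. -/

open Metric Set

section ModificationLevel

variable {M : Type*}

/-- The level set of the three-Sasaki modification, with `ℝ³ = ℝ × ℂ` and no sign condition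
on `t`. -/
def modificationLevel (μ : M → ℝ × ℂ) : Set (ℝ × M × ℂ × ℂ) :=
  {x | (x.1 ^ 2 * (μ x.2.1).1, (x.1 ^ 2 : ℂ) * (μ x.2.1).2) =
        ((1 / 2 : ℝ) * (‖x.2.2.1‖ ^ 2 - ‖x.2.2.2‖ ^ 2), Complex.I * x.2.2.1 * x.2.2.2) ∧
      x.1 ^ 2 + ‖x.2.2.1‖ ^ 2 + ‖x.2.2.2‖ ^ 2 = 1}

theorem norm_sq_add_norm_sq_eq_zero_of_mul_eq_zero {R : Type*} [NormedRing R]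
    [NoZeroDivisors R] {z w : R} (hzw : z * w = 0) (h : ‖z‖ ^ 2 = ‖w‖ ^ 2) :
    ‖z‖ ^ 2 + ‖w‖ ^ 2 = 0 := by
  rcases mul_eq_zero.1 hzw with rfl | rfl <;> simp only [norm_zero] at h ⊢ <;> linarith

theorem pos_of_mem_modificationLevel {μ : M → ℝ × ℂ} {x : ℝ × M × ℂ × ℂ}
    (hx : x ∈ modificationLevel μ) (h0 : 0 ≤ x.1) : 0 < x.1 := by
  obtain ⟨⟨t, s, z, w⟩, hmoment, hsphere⟩ := x, hx
  refine h0.lt_of_ne fun ht => ?_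
  subst ht
  simp only [Prod.mk.injEq, ne_eq, OfNat.ofNat_ne_zero, not_false_eq_true, zero_pow,
    zero_mul, Complex.ofReal_zero] at hmoment hsphere
  have hnorm : ‖z‖ ^ 2 = ‖w‖ ^ 2 := by linarith [hmoment.1]
  have hzw : z * w = 0 := by simpa [mul_assoc] using hmoment.2.symm
  linarith [norm_sq_add_norm_sq_eq_zero_of_mul_eq_zero hzw hnorm]

theorem isClosed_modificationLevel [TopologicalSpace M] {μ : M → ℝ × ℂ} (hμ : Continuous μ) :
    IsClosed (modificationLevel μ) :=
  (isClosed_eq (by fun_prop) (by fun_prop)).inter (isClosed_eq (by fun_prop) continuous_const)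

theorem modificationLevel_subset_box (μ : M → ℝ × ℂ) :
    modificationLevel μ ⊆
      Icc (-1) 1 ×ˢ univ ×ˢ closedBall (0 : ℂ) 1 ×ˢ closedBall (0 : ℂ) 1 := by
  rintro ⟨t, s, z, w⟩ ⟨-, hsphere⟩
  simp only [mem_prod, mem_Icc, mem_univ, mem_closedBall, dist_zero_right, true_and]
  refine ⟨abs_le.1 (abs_le_one_iff_mul_self_le_one.2 ?_), ?_, ?_⟩ <;>
    nlinarith [sq_nonneg t, sq_nonneg ‖z‖, sq_nonneg ‖w‖, norm_nonneg z, norm_nonneg w]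

theorem isCompact_modificationLevel [TopologicalSpace M] [CompactSpace M] {μ : M → ℝ × ℂ} (hμ : Continuous μ) :
    IsCompact (modificationLevel μ) :=
  (isCompact_Icc.prod (isCompact_univ.prod
    ((isCompact_closedBall _ _).prod (isCompact_closedBall _ _)))).of_isClosed_subset
      (isClosed_modificationLevel hμ) (modificationLevel_subset_box μ)

end ModificationLevel

/-- If `μ : M → ℝ³ ≅ ℝ × ℂ` is continuous on a compact space `M`, then the level
set `{(t,s,z,w) ∈ ℝ_{>0} × M × ℂ² : t²·μ(s) = (½(|z|²−|w|²), i·z·w),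
t² + |z|² + |w|² = 1}` defining the three-Sasaki modification is compact. -/
theorem stmt_5 {M : Type*} [TopologicalSpace M] [CompactSpace M]
    (μ : M → ℝ × ℂ) (hμ : Continuous μ) :
    IsCompact {x : ℝ × M × ℂ × ℂ | 0 < x.1 ∧
      (x.1 ^ 2 * (μ x.2.1).1, (x.1 ^ 2 : ℂ) * (μ x.2.1).2) =
        ((1 / 2 : ℝ) * (‖x.2.2.1‖ ^ 2 - ‖x.2.2.2‖ ^ 2),
          Complex.I * x.2.2.1 * x.2.2.2) ∧
      x.1 ^ 2 + ‖x.2.2.1‖ ^ 2 + ‖x.2.2.2‖ ^ 2 = 1} := by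
  convert (isCompact_modificationLevel hμ).inter_right
    (isClosed_le continuous_const continuous_fst) using 1
  ext x
  exact ⟨fun ⟨h0, hx⟩ => ⟨hx, h0.le⟩, fun ⟨hx, h0⟩ => ⟨pos_of_mem_modificationLevel hx h0, hx⟩⟩
end

section
/- Let S¹ act on a space M, and consider the S¹ × S¹ action on M × ℂ² given by (e^{iψ}, e^{iθ})·(m,z,w) = (e^{iψ}e^{iθ}·m, e^{−iθ}z, e^{iθ}w), with the first circle descending to the quotient (of a G-invariant subset) by the second circle; then a point [m,z,w] has nontrivial stabiliser for the residual action if and only if either (z,w) = (0,0), or m has nontrivial stabiliser for the original S¹-action on M. -/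
/-- On the quotient of `M × ℂ²` by the circle action
`θ·(m,z,w) = (θ·m, θ⁻¹z, θw)`, the residual action `ψ·[m,z,w] = [ψ·m, z, w]`
has a nontrivial stabiliser at `[m,z,w]` (i.e. there exist `ψ ≠ 1` and `θ` with
`ψ·m = θ·m`, `θ⁻¹z = z`, `θw = w`) if and only if `(z,w) = (0,0)` or `m` has
nontrivial stabiliser for the original circle action on `M`. -/
theorem stmt_10 {M : Type*} [MulAction Circle M] (m : M) (z w : ℂ) :
    (∃ ψ : Circle, ψ ≠ 1 ∧ ∃ θ : Circle,
        ψ • m = θ • m ∧ (θ : ℂ)⁻¹ * z = z ∧ (θ : ℂ) * w = w) ↔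
      ((z = 0 ∧ w = 0) ∨ ∃ ψ : Circle, ψ ≠ 1 ∧ ψ • m = m) := by
  constructor
  · rintro ⟨ψ, hψ, θ, hm, hz, hw⟩
    by_cases h : z = 0 ∧ w = 0
    · exact Or.inl h
    · right
      have hθ : θ = 1 := by
        rcases not_and_or.mp h with h | h
        · have hz' : (θ : ℂ)⁻¹ = 1 :=
            mul_right_cancel₀ h (hz.trans (one_mul z).symm)
          ext
          simpa using inv_eq_one.mp hz'
        · have : (θ : ℂ) = 1 := by
            have := mul_right_cancel₀ h (hw.trans (one_mul w).symm)
            exact this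
          ext; simpa using this
      exact ⟨ψ, hψ, by simpa [hθ] using hm⟩
  · rintro (⟨hz, hw⟩ | ⟨ψ, hψ, hm⟩)
    · refine ⟨⟨-1, by simp [Submonoid.unitSphere]⟩, ?_, ⟨-1, by simp [Submonoid.unitSphere]⟩, rfl, by simp [hz], by simp [hw]⟩
      intro h
      have := congrArg (fun x : Circle => (x : ℂ)) h
      simp at this
      norm_num at this
    · exact ⟨ψ, hψ, 1, by simpa using hm, by simp, by simp⟩
end

section
/- Let μ = (μ_ℝ, μ_ℂ) : M → ℝ × ℂ be continuous and define Φ : M × ℂ² → ℝ × ℂ by Φ(m,z,w) = (μ_ℝ(m) − ½(|z|² + |w|²), μ_ℂ(m) − i·z·w̄). Then for ε = (ε_ℝ, ε_ℂ), the image of the projection π : Φ⁻¹(ε) → M is exactly {m ∈ M : μ_ℝ(m) − ε_ℝ ≥ |μ_ℂ(m) − ε_ℂ|}. -/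
/-!
`m` lies in the image of the projection iff `μ(m) - ε` is a value of the flat moment map
`(z, w) ↦ (½(|z|² + |w|²), i z w̄)`. Its second component has modulus `|z||w|`, which is at most
the first component by AM–GM. Conversely, given `|b| ≤ a`, the real numbers
`r, t = √((a + |b|)/2) ± √((a - |b|)/2)` satisfy `r² + t² = 2a` and `rt = |b|`, and
`(z, w) = (r e^{i arg b}, i t)` is mapped to `(a, b)`.
-/

open Complex ComplexConjugate

noncomputable def flatMoment (p : ℂ × ℂ) : ℝ × ℂ :=
  ((1 / 2 : ℝ) * (‖p.1‖ ^ 2 + ‖p.2‖ ^ 2), I * p.1 * conj p.2)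

lemma exists_sq_add_sq_eq_and_mul_eq {a c : ℝ} (hc : 0 ≤ c) (hca : c ≤ a) :
    ∃ r t : ℝ, 0 ≤ r ∧ 0 ≤ t ∧ r ^ 2 + t ^ 2 = 2 * a ∧ r * t = c := by
  set p := √((a + c) / 2)
  set q := √((a - c) / 2)
  have hp : p ^ 2 = (a + c) / 2 := Real.sq_sqrt (by linarith)
  have hq : q ^ 2 = (a - c) / 2 := Real.sq_sqrt (by linarith)
  have hqp : q ≤ p := Real.sqrt_le_sqrt (by linarith)
  refine ⟨p + q, p - q, by positivity, by linarith, ?_, ?_⟩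
  · linear_combination 2 * hp + 2 * hq
  · linear_combination hp - hq

lemma mem_range_flatMoment_iff {x : ℝ × ℂ} : x ∈ Set.range flatMoment ↔ ‖x.2‖ ≤ x.1 := by
  constructor
  · rintro ⟨⟨z, w⟩, rfl⟩
    simp only [flatMoment, norm_mul, norm_I, one_mul, Complex.norm_conj]
    nlinarith [two_mul_le_add_sq ‖z‖ ‖w‖]
  · obtain ⟨a, b⟩ := x
    rintro (hba : ‖b‖ ≤ a)
    obtain ⟨r, t, hr, ht, hsum, hprod⟩ := exists_sq_add_sq_eq_and_mul_eq (norm_nonneg b) hba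
    refine ⟨(r * exp (arg b * I), t * I), ?_⟩
    simp only [flatMoment, Prod.mk.injEq]
    constructor
    · simp [abs_of_nonneg hr, abs_of_nonneg ht, hsum]
    · conv_rhs => rw [← norm_mul_exp_arg_mul_I b, ← hprod]
      simp only [map_mul, conj_ofReal, conj_I, ofReal_mul]
      linear_combination (-(r : ℂ) * t * exp (arg b * I)) * I_sq

theorem stmt_19_general {M : Type*}
    (μR : M → ℝ) (μC : M → ℂ)
    (εR : ℝ) (εC : ℂ) :
    (fun x : M × ℂ × ℂ => x.1) ''
        {x : M × ℂ × ℂ |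
          (μR x.1 - (1 / 2 : ℝ) * (‖x.2.1‖ ^ 2 + ‖x.2.2‖ ^ 2),
            μC x.1 - Complex.I * x.2.1 * (starRingEnd ℂ x.2.2)) = (εR, εC)} =
      {m : M | ‖μC m - εC‖ ≤ μR m - εR} := by
  have fiber_iff (m : M) (z w : ℂ) :
      (μR m - (1 / 2 : ℝ) * (‖z‖ ^ 2 + ‖w‖ ^ 2), μC m - I * z * conj w) = (εR, εC) ↔
        flatMoment (z, w) = (μR m - εR, μC m - εC) := by
    change (μR m, μC m) - flatMoment (z, w) = (εR, εC) ↔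
      flatMoment (z, w) = (μR m, μC m) - (εR, εC)
    rw [sub_eq_iff_eq_add, eq_sub_iff_add_eq, add_comm, eq_comm]
  ext m
  simp only [Set.mem_image, Set.mem_ofPred_eq, Prod.exists, exists_and_right, exists_eq_right,
    fiber_iff]
  exact Prod.exists.symm.trans mem_range_flatMoment_iff

/-- Hypersymplectic cut, set-theoretic level: for
`Φ(m,z,w) = (μ_ℝ(m) − ½(|z|² + |w|²), μ_ℂ(m) − i·z·w̄)` on `M × ℂ²` and
`ε = (ε_ℝ, ε_ℂ)`, the image of the projection `π : Φ⁻¹(ε) → M` is exactly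
`{m ∈ M : μ_ℝ(m) − ε_ℝ ≥ |μ_ℂ(m) − ε_ℂ|}`. -/
theorem stmt_19 {M : Type*} [TopologicalSpace M]
    (μR : M → ℝ) (μC : M → ℂ) (hμR : Continuous μR) (hμC : Continuous μC)
    (εR : ℝ) (εC : ℂ) :
    (fun x : M × ℂ × ℂ => x.1) ''
        {x : M × ℂ × ℂ |
          (μR x.1 - (1 / 2 : ℝ) * (‖x.2.1‖ ^ 2 + ‖x.2.2‖ ^ 2),
            μC x.1 - Complex.I * x.2.1 * (starRingEnd ℂ x.2.2)) = (εR, εC)} =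
      {m : M | ‖μC m - εC‖ ≤ μR m - εR} :=
  stmt_19_general μR μC εR εC
end
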